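/- arXiv:2409.18609 — 3 statements merged into one kernel-verified Lean document; each statement's English description precedes it below -/
import Mathlib

section
/- Let a, c, d be elements of a field with a ≠ 0 and a ≠ c. Define sequences by a_{n+1} = (a_n^2 - a_n c_n - a_n d_n)/(a_n - c_n), c_{n+1} = (a_n c_n - 2 a_n d_n - c_n^2)/(a_n - c_n), d_{n+1} = (a_n d_n)/(a_n - c_n), with a_0 = a, c_0 = c, d_0 = d. Suppose a_k ≠ 0 and a_k ≠ c_k for all k ≤ n. Then a_{n+1} · (c_0 - 2a_0 + a_n) = a_0 · (c_0 + d_0 - a_0). -/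
theorem stmt_0 {K : Type*} [Field K] (a c d : K) (ha : a ≠ 0) (hac : a ≠ c)
    (A C D : ℕ → K)
    (hA0 : A 0 = a) (hC0 : C 0 = c) (hD0 : D 0 = d)
    (hrecA : ∀ m, A (m + 1) = (A m ^ 2 - A m * C m - A m * D m) / (A m - C m))
    (hrecC : ∀ m, C (m + 1) = (A m * C m - 2 * A m * D m - C m ^ 2) / (A m - C m))
    (hrecD : ∀ m, D (m + 1) = (A m * D m) / (A m - C m))
    (n : ℕ)
    (hne : ∀ k ≤ n, A k ≠ 0 ∧ A k ≠ C k) :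
    A (n + 1) * (C 0 - 2 * A 0 + A n) = A 0 * (C 0 + D 0 - A 0) := by
  -- invariants: C k - 2 * A k = C 0 - 2 * A 0 and A k * (C k + D k - A k) = A 0 * (...)
  have key : ∀ k ≤ n, C k - 2 * A k = C 0 - 2 * A 0 ∧
      A k * (C k + D k - A k) = A 0 * (C 0 + D 0 - A 0) := by
    intro k hk
    induction k with
    | zero => exact ⟨rfl, rfl⟩
    | succ m ih =>
      have hm : m ≤ n := Nat.le_of_succ_le hk
      obtain ⟨h1, h2⟩ := ih hm
      obtain ⟨hA, hAC⟩ := hne m hm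
      have hsub : A m - C m ≠ 0 := sub_ne_zero.mpr hAC
      constructor
      · rw [hrecC m, hrecA m, ← h1]
        field_simp
        ring
      · rw [hrecA m, hrecC m, hrecD m, ← h2]
        field_simp
        ring
  obtain ⟨h1, h2⟩ := key n le_rfl
  obtain ⟨hA, hAC⟩ := hne n le_rfl
  have hsub : A n - C n ≠ 0 := sub_ne_zero.mpr hAC
  have : A (n + 1) * (C 0 - 2 * A 0 + A n) = A n * (C n + D n - A n) := by
    rw [hrecA n, ← h1]
    field_simp
    ring
  rw [this, h2]
end

section
/- Let a, c, d be elements of a field, and define sequences a_n, c_n, d_n by a_0 = a, c_0 = c, d_0 = d and a_{n+1} = (a_n^2 - a_n c_n - a_n d_n)/(a_n - c_n), c_{n+1} = (a_n c_n - 2 a_n d_n - c_n^2)/(a_n - c_n), d_{n+1} = (a_n d_n)/(a_n - c_n). Suppose a_k ≠ 0 and a_k ≠ c_k for all k ≤ n. Then 2a_{n+1} - c_{n+1} = 2a_0 - c_0, i.e., the quantity 2a_n - c_n is invariant under the recursion. -/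
theorem stmt_1 {K : Type*} [Field K] (a c d : K)
    (A C D : ℕ → K)
    (hA0 : A 0 = a) (hC0 : C 0 = c) (hD0 : D 0 = d)
    (hrecA : ∀ m, A (m + 1) = (A m ^ 2 - A m * C m - A m * D m) / (A m - C m))
    (hrecC : ∀ m, C (m + 1) = (A m * C m - 2 * A m * D m - C m ^ 2) / (A m - C m))
    (hrecD : ∀ m, D (m + 1) = (A m * D m) / (A m - C m))
    (n : ℕ)
    (hne : ∀ k ≤ n, A k ≠ 0 ∧ A k ≠ C k) :
    2 * A (n + 1) - C (n + 1) = 2 * A 0 - C 0 := by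
  have step : ∀ m, A m ≠ C m → 2 * A (m + 1) - C (m + 1) = 2 * A m - C m := by
    intro m hm
    have hsub : A m - C m ≠ 0 := sub_ne_zero.mpr hm
    rw [hrecA, hrecC]
    field_simp
    ring
  induction n with
  | zero => exact step 0 (hne 0 le_rfl).2
  | succ n ih =>
    rw [step (n + 1) (hne (n + 1) le_rfl).2]
    exact ih (fun k hk => hne k (hk.trans (Nat.le_succ n)))
end

section
/- Let a, c, d be in a field, α = a(c + d - a), β = c - 2a, and B_n defined by B_0 = 1, B_1 = c - a, B_{n+1} = β B_n + α B_{n-1}. Define a_n = α B_{n-1}/B_n for n ≥ 1 (assuming all B_n ≠ 0) with a_0 = a, and â_n = -B_{n+1}/B_n for n ≥ 1. Then the products P_{2n+1} = a_0^{2n+1} â_0^{2n} a_1^{2n-1} â_1^{2n-2} ⋯ a_{n-1}^3 â_{n-1}^2 a_n and P_{2n} = a_0^{2n} â_0^{2n-1} a_1^{2n-2} ⋯ a_{n-1}^2 â_{n-1} satisfy: P_{2n+1} = a^{(n+1)^2} (c + d - a)^{n^2} B_n and P_{2n} = (-1)^n a^{n(n+1)} (c + d - a)^{n(n-1)} B_n.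 -/
theorem stmt_10 {K : Type*} [Field K] (a c d : K) (ha : a ≠ 0) (hcda : c + d - a ≠ 0)
    (B : ℕ → K) (hB0 : B 0 = 1) (hB1 : B 1 = c - a)
    (hBrec : ∀ n, B (n + 2) = (c - 2 * a) * B (n + 1) + a * (c + d - a) * B n)
    (hBne : ∀ n, B n ≠ 0)
    (A Ahat : ℕ → K) (hA0 : A 0 = a)
    (hA : ∀ i, 1 ≤ i → A i = a * (c + d - a) * B (i - 1) / B i)
    (hAhat : ∀ i, Ahat i = -B (i + 1) / B i) :
    ∀ n : ℕ,
      (∏ i ∈ Finset.range n, A i ^ (2 * n + 1 - 2 * i) * Ahat i ^ (2 * n - 2 * i)) * A n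
          = a ^ (n + 1) ^ 2 * (c + d - a) ^ (n ^ 2) * B n ∧
      (∏ i ∈ Finset.range n, A i ^ (2 * n - 2 * i) * Ahat i ^ (2 * n - 1 - 2 * i))
          = (-1 : K) ^ n * a ^ (n * (n + 1)) * (c + d - a) ^ (n * (n - 1)) * B n := by
  have hG : ∀ n : ℕ, (∏ i ∈ Finset.range n, A i * Ahat i) * A n
      = (-1 : K) ^ n * a ^ (n + 1) * (c + d - a) ^ n := by
    intro n
    induction n with
    | zero => simp [hA0]
    | succ n ih =>
      have hAn1 : A (n + 1) = a * (c + d - a) * B n / B (n + 1) := by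
        have := hA (n + 1) (by omega); simpa using this
      rw [Finset.prod_range_succ]
      calc (∏ i ∈ Finset.range n, A i * Ahat i) * (A n * Ahat n) * A (n + 1)
          = ((∏ i ∈ Finset.range n, A i * Ahat i) * A n) * (Ahat n * A (n + 1)) := by ring
        _ = ((-1 : K) ^ n * a ^ (n + 1) * (c + d - a) ^ n) * (Ahat n * A (n + 1)) := by
            rw [ih]
        _ = _ := by
            rw [hAhat n, hAn1, pow_succ, pow_succ, pow_succ]
            field_simp [hBne n, hBne (n + 1)]
            ring
  intro n
  induction n with
  | zero => simp [hA0, hB0]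
  | succ n ih =>
    obtain ⟨ihodd, iheven⟩ := ih
    have key : (∏ i ∈ Finset.range (n + 1), A i ^ (2 * n + 1 - 2 * i) * Ahat i ^ (2 * n - 2 * i))
        = a ^ (n + 1) ^ 2 * (c + d - a) ^ (n ^ 2) * B n := by
      rw [Finset.prod_range_succ]
      have e1 : 2 * n + 1 - 2 * n = 1 := by omega
      have e2 : 2 * n - 2 * n = 0 := by omega
      rw [e1, e2, pow_one, pow_zero, mul_one]
      exact ihodd
    have keyQ : (∏ i ∈ Finset.range (n + 1), A i * Ahat i)
        = (-1 : K) ^ n * a ^ (n + 1) * (c + d - a) ^ n * Ahat n := by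
      rw [Finset.prod_range_succ, ← mul_assoc, hG n]
    have heven : (∏ i ∈ Finset.range (n + 1),
        A i ^ (2 * (n + 1) - 2 * i) * Ahat i ^ (2 * (n + 1) - 1 - 2 * i))
        = (-1 : K) ^ (n + 1) * a ^ ((n + 1) * (n + 2)) * (c + d - a) ^ ((n + 1) * n) * B (n + 1) := by
      have hsplit : ∀ i ∈ Finset.range (n + 1),
          A i ^ (2 * (n + 1) - 2 * i) * Ahat i ^ (2 * (n + 1) - 1 - 2 * i)
            = (A i ^ (2 * n + 1 - 2 * i) * Ahat i ^ (2 * n - 2 * i)) * (A i * Ahat i) := by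
        intro i hi
        have hi' : i ≤ n := by simpa [Nat.lt_succ_iff] using hi
        have h1 : 2 * (n + 1) - 2 * i = (2 * n + 1 - 2 * i) + 1 := by omega
        have h2 : 2 * (n + 1) - 1 - 2 * i = (2 * n - 2 * i) + 1 := by omega
        rw [h1, h2, pow_succ, pow_succ]; ring
      rw [Finset.prod_congr rfl hsplit, Finset.prod_mul_distrib, key, keyQ, hAhat n]
      have e3 : (n + 1) * (n + 2) = (n + 1) ^ 2 + (n + 1) := by ring
      have e4 : (n + 1) * n = n ^ 2 + n := by ring
      rw [e3, e4, pow_add, pow_add, pow_succ]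
      field_simp [hBne n]
      ring
    constructor
    · -- odd part
      have hsplit2 : ∀ i ∈ Finset.range (n + 1),
          A i ^ (2 * (n + 1) + 1 - 2 * i) * Ahat i ^ (2 * (n + 1) - 2 * i)
            = (A i ^ (2 * (n + 1) - 2 * i) * Ahat i ^ (2 * (n + 1) - 1 - 2 * i)) * (A i * Ahat i) := by
        intro i hi
        have hi' : i ≤ n := by simpa [Nat.lt_succ_iff] using hi
        have h1 : 2 * (n + 1) + 1 - 2 * i = (2 * (n + 1) - 2 * i) + 1 := by omega
        have h2 : 2 * (n + 1) - 2 * i = (2 * (n + 1) - 1 - 2 * i) + 1 := by omega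
        rw [h1]
        nth_rewrite 2 [h2]
        rw [pow_succ, pow_succ]; ring
      rw [Finset.prod_congr rfl hsplit2, Finset.prod_mul_distrib, heven, mul_assoc, hG (n + 1)]
      have hneg : ((-1 : K)) ^ (n + 1) * (-1 : K) ^ (n + 1) = 1 := by
        rw [← mul_pow]; norm_num
      have p1 : a ^ ((n + 1 + 1) ^ 2) = a ^ ((n + 1) * (n + 2)) * a ^ (n + 1 + 1) := by
        rw [← pow_add]; congr 1; ring
      have p2 : (c + d - a) ^ ((n + 1) ^ 2)
          = (c + d - a) ^ ((n + 1) * n) * (c + d - a) ^ (n + 1) := by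
        rw [← pow_add]; congr 1; ring
      calc (-1 : K) ^ (n + 1) * a ^ ((n + 1) * (n + 2)) * (c + d - a) ^ ((n + 1) * n) * B (n + 1) *
            ((-1 : K) ^ (n + 1) * a ^ (n + 1 + 1) * (c + d - a) ^ (n + 1))
          = ((-1 : K) ^ (n + 1) * (-1 : K) ^ (n + 1)) *
              (a ^ ((n + 1) * (n + 2)) * a ^ (n + 1 + 1) *
                ((c + d - a) ^ ((n + 1) * n) * (c + d - a) ^ (n + 1)) * B (n + 1)) := by ring
        _ = _ := by rw [hneg, p1, p2]; ring
    · -- even part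
      have e7 : n + 1 - 1 = n := by omega
      have e8 : (n + 1) * (n + 1 + 1) = (n + 1) * (n + 2) := by ring
      rw [e7, e8]
      exact heven
end
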